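/- Let A be a connected graph with at least one cycle and e ∈ E(A). If e does not belong to the kernel ⌊A⌋ of A, then A \ e has exactly two components, exactly one of which is a tree, and the other component contains ⌊A⌋. -/

import Mathlib

open scoped Classical

/-- A finite multigraph: loops and parallel edges allowed. -/
structure Multigraph where
  V : Type
  E : Type
  [fintypeV : Fintype V]
  [fintypeE : Fintype E]
  ends : E → Sym2 V

attribute [instance] Multigraph.fintypeV Multigraph.fintypeE

namespace Multigraph

variable (G : Multigraph)

/-- Vertex support of an edge set: vertices incident to some edge of `X`. -/
noncomputable def supp (X : Finset G.E) : Finset G.V :=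
  Finset.univ.filter (fun v => ∃ e ∈ X, v ∈ G.ends e)

/-- `Δ` of the subgraph induced by the edge set `X`. -/
noncomputable def delta (X : Finset G.E) : ℤ := (X.card : ℤ) - (G.supp X).card

/-- `Δ(G) = |E(G)| - |V(G)|`. -/
noncomputable def deltaG : ℤ := (Fintype.card G.E : ℤ) - (Fintype.card G.V : ℤ)

/-- Degree of `v` in the edge set `X`: loops count twice. -/
noncomputable def degIn (X : Finset G.E) (v : G.V) : ℕ :=
  ∑ e ∈ X, (if G.ends e = s(v, v) then 2 else if v ∈ G.ends e then 1 else 0)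

/-- `u` and `v` are joined by an edge of `X`. -/
def adjIn (X : Finset G.E) (u v : G.V) : Prop := ∃ e ∈ X, G.ends e = s(u, v)

/-- Reachability using only edges of `X`. -/
def reachIn (X : Finset G.E) : G.V → G.V → Prop :=
  Relation.ReflTransGen (G.adjIn X)

/-- The edge set `X` induces a connected subgraph. -/
def ConnSet (X : Finset G.E) : Prop :=
  X.Nonempty ∧ ∀ u ∈ G.supp X, ∀ v ∈ G.supp X, G.reachIn X u v

/-- Edges of the component of the subgraph `(V, X)` containing vertex `v`. -/
noncomputable def compEdges (X : Finset G.E) (v : G.V) : Finset G.E :=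
  X.filter (fun f => ∃ u ∈ G.ends f, G.reachIn X v u)

/-- Vertices of the component of `v` in the graph `(V, X)` (all vertices kept). -/
noncomputable def compVerts (X : Finset G.E) (v : G.V) : Finset G.V :=
  Finset.univ.filter (fun u => G.reachIn X v u)

/-- `C` is (the edge set of) a cycle: connected, every vertex of degree 2. -/
def IsCycleSet (C : Finset G.E) : Prop :=
  G.ConnSet C ∧ ∀ v ∈ G.supp C, G.degIn C v = 2

/-- `T` induces a tree. -/
def IsTreeSet (T : Finset G.E) : Prop := G.ConnSet T ∧ G.delta T = -1

/-- The component of `v` in `(V, X)` is a tree (possibly a single vertex). -/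
def IsTreeCompAt (X : Finset G.E) (v : G.V) : Prop :=
  (G.compEdges X v).card + 1 = (G.compVerts X v).card

/-- The number of tree components of the graph `(V, X)`. -/
noncomputable def treeCount (X : Finset G.E) : ℕ :=
  (((Finset.univ : Finset G.V).filter (fun v => G.IsTreeCompAt X v)).image
    (fun v => G.compVerts X v)).card

/-- The graph `G` has no isolated vertices. -/
def NoIso : Prop := ∀ v : G.V, ∃ e : G.E, v ∈ G.ends e

/-- The graph `G` has no leaves. -/
def NoLeaf : Prop := ∀ v : G.V, G.degIn Finset.univ v ≠ 1

/-- The graph `G` is connected. -/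
def GConn : Prop := Nonempty G.V ∧ ∀ u v : G.V, G.reachIn Finset.univ u v

/-- `G` is a bicycle: connected, leafless, with `Δ(G) = 1`. -/
def IsBicycle : Prop := G.GConn ∧ G.NoLeaf ∧ G.deltaG = 1

/-- One round of deleting all edges incident to a leaf. -/
noncomputable def pruneStep (X : Finset G.E) : Finset G.E :=
  X.filter (fun e => ∀ v ∈ G.ends e, G.degIn X v ≠ 1)

/-- Edge set obtained from `G` by repeatedly deleting leaves until none remain. -/
noncomputable def kernelSet : Finset G.E :=
  G.pruneStep^[Fintype.card G.E] Finset.univ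

/-- `Δ` of the component of `G` containing `v`. -/
noncomputable def compDelta (v : G.V) : ℤ :=
  ((G.compEdges Finset.univ v).card : ℤ) - ((G.compVerts Finset.univ v).card : ℤ)

/-- The core `[G]`: union of the kernels of the components `A` with `Δ(A) ≥ 1`. -/
noncomputable def coreSet : Finset G.E :=
  G.kernelSet.filter (fun e => ∀ v ∈ G.ends e, 1 ≤ G.compDelta v)

/-- `P` is the edge set of an `(x,y)`-path. -/
def IsPathSet (P : Finset G.E) (x y : G.V) : Prop :=
  G.ConnSet P ∧ x ≠ y ∧ x ∈ G.supp P ∧ y ∈ G.supp P ∧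
  G.degIn P x = 1 ∧ G.degIn P y = 1 ∧
  ∀ v ∈ G.supp P, v ≠ x → v ≠ y → G.degIn P v = 2

/-- `C` induces a bicycle subgraph: connected, leafless, `Δ = 1`. -/
def IsBicycleSet (C : Finset G.E) : Prop :=
  G.ConnSet C ∧ (∀ v ∈ G.supp C, G.degIn C v ≠ 1) ∧ G.delta C = 1

/-- Circuits of the `k`-circular matroid `M_k(G)`: minimal nonempty edge sets `C`
with `|C| = |V(G⟨C⟩)| + k`, i.e. `Δ(G⟨C⟩) = k`. -/
def IsCircuitSet (k : ℕ) (C : Finset G.E) : Prop :=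
  (C.Nonempty ∧ G.delta C = (k : ℤ)) ∧
  ∀ D ⊂ C, ¬ (D.Nonempty ∧ G.delta D = (k : ℤ))

/-- Independent sets of `M_k(G)`. -/
def Indep (k : ℕ) (I : Finset G.E) : Prop := ∀ C ⊆ I, ¬ G.IsCircuitSet k C

/-- Bases of `M_k(G)`: maximal independent sets. -/
def IsBase (k : ℕ) (B : Finset G.E) : Prop :=
  G.Indep k B ∧ ∀ B' : Finset G.E, G.Indep k B' → B ⊆ B' → B' = B

/-- The matroid `M_k(G)` is connected: at least two elements and every two
elements lie on a common circuit. -/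
def MConn (k : ℕ) : Prop :=
  2 ≤ Fintype.card G.E ∧
  ∀ a b : G.E, ∃ C : Finset G.E, G.IsCircuitSet k C ∧ a ∈ C ∧ b ∈ C

end Multigraph

namespace Multigraph

variable (G : Multigraph)

lemma ends_rep (f : G.E) : ∃ a b, G.ends f = s(a, b) := by
  obtain ⟨⟨a, b⟩, h⟩ := Quot.exists_rep (G.ends f)
  exact ⟨a, b, h.symm⟩

lemma adjIn_symm {X : Finset G.E} {u v : G.V} (h : G.adjIn X u v) : G.adjIn X v u := by
  obtain ⟨f, hf, h2⟩ := h
  exact ⟨f, hf, h2.trans Sym2.eq_swap⟩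

lemma reachIn_symm {X : Finset G.E} {u v : G.V} (h : G.reachIn X u v) : G.reachIn X v u :=
  by
    haveI : Std.Symm (G.adjIn X) := ⟨fun _ _ hh => G.adjIn_symm hh⟩
    exact (Relation.ReflTransGen.stdSymm (r := G.adjIn X)).symm _ _ h

def walkN (X : Finset G.E) : ℕ → G.V → G.V → Prop
  | 0, u, v => u = v
  | n+1, u, v => u = v ∨ ∃ a, G.adjIn X u a ∧ walkN X n a v

lemma reachIn_iff_walkN {X : Finset G.E} {u v : G.V} :
    G.reachIn X u v ↔ ∃ n, G.walkN X n u v := by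
  constructor
  · intro h
    induction h using Relation.ReflTransGen.head_induction_on with
    | refl => exact ⟨0, rfl⟩
    | head hadj _ ih =>
      obtain ⟨n, hn⟩ := ih
      exact ⟨n + 1, Or.inr ⟨_, hadj, hn⟩⟩
  · rintro ⟨n, hn⟩
    induction n generalizing u with
    | zero => exact hn ▸ Relation.ReflTransGen.refl
    | succ n ih =>
      rcases hn with rfl | ⟨a, ha, hw⟩
      · exact Relation.ReflTransGen.refl
      · exact Relation.ReflTransGen.head ha (ih hw)

lemma mem_supp_iff {X : Finset G.E} {v : G.V} :
    v ∈ G.supp X ↔ ∃ f ∈ X, v ∈ G.ends f := by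
  simp [supp]

lemma mem_compVerts_iff {X : Finset G.E} {x u : G.V} :
    u ∈ G.compVerts X x ↔ G.reachIn X x u := by
  simp [compVerts]

lemma mem_compEdges_iff {X : Finset G.E} {x : G.V} {f : G.E} :
    f ∈ G.compEdges X x ↔ f ∈ X ∧ ∃ u ∈ G.ends f, G.reachIn X x u := by
  simp [compEdges]

lemma degIn_mono {X Y : Finset G.E} (h : X ⊆ Y) (v : G.V) : G.degIn X v ≤ G.degIn Y v :=
  Finset.sum_le_sum_of_subset h

lemma term_pos {f : G.E} {v : G.V} (hv : v ∈ G.ends f) :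
    1 ≤ (if G.ends f = s(v, v) then 2 else if v ∈ G.ends f then 1 else 0) := by
  split_ifs <;> omega

lemma term_le_degIn {X : Finset G.E} {f : G.E} (v : G.V) (hf : f ∈ X) :
    (if G.ends f = s(v, v) then 2 else if v ∈ G.ends f then 1 else 0) ≤ G.degIn X v :=
  Finset.single_le_sum
    (f := fun e => if G.ends e = s(v, v) then 2 else if v ∈ G.ends e then 1 else 0)
    (fun _ _ => Nat.zero_le _) hf

lemma one_le_degIn {X : Finset G.E} {f : G.E} {v : G.V} (hf : f ∈ X) (hv : v ∈ G.ends f) :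
    1 ≤ G.degIn X v :=
  le_trans (G.term_pos hv) (G.term_le_degIn v hf)

lemma two_le_degIn_loop {X : Finset G.E} {f : G.E} {v : G.V} (hf : f ∈ X)
    (hv : G.ends f = s(v, v)) : 2 ≤ G.degIn X v := by
  have h := G.term_le_degIn v hf
  rw [if_pos hv] at h
  exact h

lemma two_le_degIn_pair {X : Finset G.E} {f g : G.E} {v : G.V} (hf : f ∈ X) (hg : g ∈ X)
    (hfg : f ≠ g) (hvf : v ∈ G.ends f) (hvg : v ∈ G.ends g) : 2 ≤ G.degIn X v := by
  have hsub : ({f, g} : Finset G.E) ⊆ X := by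
    intro z hz
    rcases Finset.mem_insert.mp hz with rfl | hz
    · exact hf
    · exact (Finset.mem_singleton.mp hz) ▸ hg
  have h := Finset.sum_le_sum_of_subset
    (f := fun e => if G.ends e = s(v, v) then 2 else if v ∈ G.ends e then 1 else 0) hsub
  rw [Finset.sum_pair hfg] at h
  beta_reduce at h
  have h1 := G.term_pos hvf
  have h2 := G.term_pos hvg
  unfold degIn
  omega

lemma deg_one_edge {X : Finset G.E} {z : G.V} (h : G.degIn X z = 1) :
    ∃ f ∈ X, z ∈ G.ends f ∧ G.ends f ≠ s(z, z) ∧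
      ∀ g ∈ X, z ∈ G.ends g → g = f := by
  by_cases hex : ∃ f ∈ X, z ∈ G.ends f
  · obtain ⟨f, hfX, hzf⟩ := hex
    refine ⟨f, hfX, hzf, ?_, ?_⟩
    · intro hloop
      have := G.two_le_degIn_loop hfX hloop
      omega
    · intro g hg hzg
      by_contra hne
      have := G.two_le_degIn_pair hg hfX hne hzg hzf
      omega
  · exfalso
    have hz : G.degIn X z = 0 := by
      refine Finset.sum_eq_zero (fun f hf => ?_)
      have hnm : z ∉ G.ends f := fun hm => hex ⟨f, hf, hm⟩
      rw [if_neg, if_neg hnm]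
      intro hloop
      exact hnm (hloop ▸ Sym2.mem_mk_left z z)
    omega

lemma shortcut {X : Finset G.E} {z : G.V} (hz : G.degIn X z = 1) {f : G.E}
    (hfX : f ∈ X) (hzf : z ∈ G.ends f) {u v : G.V} (hu : u ≠ z) (hv : v ≠ z)
    (h : G.reachIn X u v) : G.reachIn (X.erase f) u v := by
  obtain ⟨f', _, _, hnl', huniq'⟩ := G.deg_one_edge hz
  have hff : f' = f := (huniq' f hfX hzf).symm
  subst hff
  have huniq : ∀ g ∈ X, z ∈ G.ends g → g = f' := huniq'
  obtain ⟨n, hw⟩ := G.reachIn_iff_walkN.mp h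
  clear h
  have key : ∀ n, ∀ u, u ≠ z → G.walkN X n u v → G.reachIn (X.erase f') u v := by
    intro n
    induction n using Nat.strong_induction_on with
    | _ n ih =>
      intro u hu hw
      match n, hw with
      | 0, hw => exact hw ▸ Relation.ReflTransGen.refl
      | (m+1), hw =>
        rcases hw with rfl | ⟨a, ⟨g, hgX, hg⟩, hw'⟩
        · exact Relation.ReflTransGen.refl
        by_cases ha : a = z
        · subst ha
          have hgf : g = f' := huniq g hgX (hg ▸ Sym2.mem_mk_right u a)
          have hef : G.ends f' = s(u, a) := hgf ▸ hg
          match m, hw' with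
          | 0, hw' => exact absurd hw'.symm hv
          | (k+1), hw' =>
            rcases hw' with heq | ⟨b, ⟨h', hh'X, hh'⟩, hw''⟩
            · exact absurd heq.symm hv
            · have hh'f : h' = f' := huniq h' hh'X (hh' ▸ Sym2.mem_mk_left a b)
              have hsym : s(a, b) = s(u, a) := by rw [← hh', hh'f, hef]
              rcases Sym2.eq_iff.mp hsym with ⟨h1, _⟩ | ⟨_, h2⟩
              · exact absurd h1 hu.symm
              · exact ih k (by omega) u hu (h2 ▸ hw'')

        · have hgf : g ≠ f' := by
            intro hh
            subst hh
            rcases Sym2.mem_iff.mp (hg ▸ hzf) with h1 | h1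
            · exact hu h1.symm
            · exact ha h1.symm
          exact Relation.ReflTransGen.head
            ⟨g, Finset.mem_erase.mpr ⟨hgf, hgX⟩, hg⟩
            (ih m (by omega) a ha hw')
  exact key n u hu hw

def GoodSet (C : Finset G.E) : Prop :=
  ∀ v, (∃ f ∈ C, v ∈ G.ends f) → 2 ≤ G.degIn C v

lemma pruneStep_subset (X : Finset G.E) : G.pruneStep X ⊆ X := Finset.filter_subset _ _

lemma iterate_fix : ∀ n (X : Finset G.E), X.card ≤ n →
    G.pruneStep (G.pruneStep^[n] X) = G.pruneStep^[n] X := by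
  intro n
  induction n with
  | zero =>
    intro X hX
    have hX0 : X = ∅ := Finset.card_eq_zero.mp (Nat.le_zero.mp hX)
    subst hX0
    simp only [Function.iterate_zero, id_eq]
    exact Finset.subset_empty.mp (G.pruneStep_subset ∅)
  | succ n ih =>
    intro X hX
    by_cases h : G.pruneStep X = X
    · rw [Function.iterate_fixed h (n+1)]
      exact h
    · have hss : G.pruneStep X ⊂ X := (G.pruneStep_subset X).ssubset_of_ne h
      have hcard : (G.pruneStep X).card ≤ n := by
        have := Finset.card_lt_card hss
        omega
      rw [Function.iterate_succ_apply]
      exact ih _ hcard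

lemma kernel_fix : G.pruneStep G.kernelSet = G.kernelSet :=
  G.iterate_fix (Fintype.card G.E) Finset.univ (le_of_eq (Finset.card_univ))

lemma kernel_good : G.GoodSet G.kernelSet := by
  rintro v ⟨f, hfK, hvf⟩
  have hf2 : f ∈ G.pruneStep G.kernelSet := G.kernel_fix.symm ▸ hfK
  have hne := (Finset.mem_filter.mp hf2).2 v hvf
  have h1 := G.one_le_degIn hfK hvf
  omega

lemma good_subset_kernel {C : Finset G.E} (hC : G.GoodSet C) : C ⊆ G.kernelSet := by
  have h : ∀ n, C ⊆ G.pruneStep^[n] Finset.univ := by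
    intro n
    induction n with
    | zero => simp [Finset.subset_univ]
    | succ n ih =>
      rw [Function.iterate_succ_apply']
      intro f hfC
      refine Finset.mem_filter.mpr ⟨ih hfC, ?_⟩
      intro v hv
      have h2 := hC v ⟨f, hfC, hv⟩
      have h3 := G.degIn_mono ih v
      omega
  exact h _

lemma reach_of_both_ends {X : Finset G.E} {f : G.E} (hfX : f ∈ X) {u v : G.V}
    (hu : u ∈ G.ends f) (hv : v ∈ G.ends f) : G.reachIn X u v := by
  obtain ⟨a, b, hab⟩ := G.ends_rep f
  rw [hab] at hu hv
  rcases Sym2.mem_iff.mp hu with rfl | rfl <;> rcases Sym2.mem_iff.mp hv with rfl | rfl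
  · exact Relation.ReflTransGen.refl
  · exact Relation.ReflTransGen.single ⟨f, hfX, hab⟩
  · exact Relation.ReflTransGen.single ⟨f, hfX, hab.trans Sym2.eq_swap⟩
  · exact Relation.ReflTransGen.refl

lemma reach_end_of_compEdges {X : Finset G.E} {x : G.V} {f : G.E}
    (hf : f ∈ G.compEdges X x) {v : G.V} (hv : v ∈ G.ends f) : G.reachIn X x v := by
  obtain ⟨hfX, u, hu, hxu⟩ := Finset.mem_filter.mp hf
  exact hxu.trans (G.reach_of_both_ends hfX hu hv)

lemma supp_compEdges_subset {X : Finset G.E} {x : G.V} :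
    G.supp (G.compEdges X x) ⊆ G.compVerts X x := by
  intro v hv
  obtain ⟨f, hf, hvf⟩ := G.mem_supp_iff.mp hv
  exact G.mem_compVerts_iff.mpr (G.reach_end_of_compEdges hf hvf)

lemma edge_mem_compEdges {X : Finset G.E} {x : G.V} {f : G.E} {v : G.V}
    (hfX : f ∈ X) (hvf : v ∈ G.ends f) (hxv : G.reachIn X x v) : f ∈ G.compEdges X x :=
  Finset.mem_filter.mpr ⟨hfX, ⟨v, hvf, hxv⟩⟩

lemma exists_edge_of_reach_ne {X : Finset G.E} {u v : G.V} (h : G.reachIn X u v)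
    (hne : u ≠ v) : ∃ g ∈ X, u ∈ G.ends g := by
  rcases Relation.ReflTransGen.cases_head h with rfl | ⟨a, ⟨g, hgX, hg⟩, _⟩
  · exact absurd rfl hne
  · exact ⟨g, hgX, hg ▸ Sym2.mem_mk_left u a⟩

lemma handshake (C : Finset G.E) :
    ∑ v ∈ G.supp C, G.degIn C v = 2 * C.card := by
  unfold degIn
  rw [Finset.sum_comm]
  have hmain : ∀ f ∈ C, (∑ x ∈ G.supp C,
      if G.ends f = s(x, x) then 2 else if x ∈ G.ends f then 1 else 0) = 2 := by
    intro f hf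
    obtain ⟨a, b, hab⟩ := G.ends_rep f
    have haS : a ∈ G.supp C := G.mem_supp_iff.mpr ⟨f, hf, hab ▸ Sym2.mem_mk_left a b⟩
    have hbS : b ∈ G.supp C := G.mem_supp_iff.mpr ⟨f, hf, hab ▸ Sym2.mem_mk_right a b⟩
    by_cases hab2 : a = b
    · subst hab2
      have hcong : ∀ v ∈ G.supp C,
          (if G.ends f = s(v, v) then 2 else if v ∈ G.ends f then 1 else 0)
            = if v = a then 2 else 0 := by
        intro v _
        by_cases hva : v = a
        · subst hva; rw [if_pos hab, if_pos rfl]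
        · rw [if_neg, if_neg, if_neg hva]
          · rw [hab, Sym2.mem_iff]
            intro hcon
            rcases hcon with h1 | h1 <;> exact hva h1
          · rw [hab]
            intro hcon
            rcases Sym2.eq_iff.mp hcon with ⟨h1, _⟩ | ⟨h1, _⟩ <;> exact hva h1.symm
      rw [Finset.sum_congr rfl hcong, Finset.sum_ite_eq' (G.supp C) a (fun _ => 2),
        if_pos haS]
    · have hcong : ∀ v ∈ G.supp C,
          (if G.ends f = s(v, v) then 2 else if v ∈ G.ends f then 1 else 0)
            = (if v = a then 1 else 0) + (if v = b then 1 else 0) := by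
        intro v _
        have hnl : G.ends f ≠ s(v, v) := by
          rw [hab]
          intro hcon
          rcases Sym2.eq_iff.mp hcon with ⟨h1, h2⟩ | ⟨h1, h2⟩ <;> exact hab2 (h1.trans h2.symm)
        rw [if_neg hnl, hab]
        by_cases hva : v = a
        · subst hva
          rw [if_pos (Sym2.mem_mk_left v b), if_pos rfl, if_neg hab2]
        · by_cases hvb : v = b
          · subst hvb
            rw [if_pos (Sym2.mem_mk_right a v), if_neg hva, if_pos rfl]
          · rw [if_neg, if_neg hva, if_neg hvb]
            rw [Sym2.mem_iff]
            intro hcon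
            rcases hcon with h1 | h1
            · exact hva h1
            · exact hvb h1
      rw [Finset.sum_congr rfl hcong, Finset.sum_add_distrib,
        Finset.sum_ite_eq' (G.supp C) a (fun _ => 1),
        Finset.sum_ite_eq' (G.supp C) b (fun _ => 1), if_pos haS, if_pos hbS]
  rw [Finset.sum_congr rfl hmain, Finset.sum_const, smul_eq_mul, mul_comm]

lemma inj_card (X : Finset G.E) (x : G.V) (S : Finset G.V) (C : Finset G.E)
    (hz : ∃ z ∈ S, G.reachIn X x z)
    (hC : ∀ f ∈ C, ∀ u, u ∈ G.ends f → u ∈ S) :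
    (G.compVerts X x \ S).card ≤ (G.compEdges X x \ C).card := by
  classical
  obtain ⟨z, hzS, hxz⟩ := hz
  rcases (G.compVerts X x \ S).eq_empty_or_nonempty with h0 | hne
  · rw [h0]
    exact Nat.zero_le _
  have hP : ∀ u ∈ G.compVerts X x \ S, ∃ n, ∃ s ∈ S, G.walkN X n u s := by
    intro u hu
    have hxu : G.reachIn X x u := G.mem_compVerts_iff.mp (Finset.mem_sdiff.mp hu).1
    obtain ⟨n, hn⟩ := G.reachIn_iff_walkN.mp ((G.reachIn_symm hxu).trans hxz)
    exact ⟨n, z, hzS, hn⟩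
  set d : G.V → ℕ := fun u => if h : ∃ n, ∃ s ∈ S, G.walkN X n u s then Nat.find h else 0
    with hd_def
  have hdle : ∀ u, ∀ m, (∃ s ∈ S, G.walkN X m u s) → d u ≤ m := by
    intro u m hm
    have hex : ∃ n, ∃ s ∈ S, G.walkN X n u s := ⟨m, hm⟩
    rw [hd_def]
    simp only [dif_pos hex]
    exact Nat.find_min' hex hm
  have key : ∀ u ∈ G.compVerts X x \ S, ∃ g, (g ∈ X ∧ g ∉ C ∧ u ∈ G.ends g) ∧
      ∃ a, G.ends g = s(u, a) ∧ (∃ s ∈ S, G.walkN X (d u - 1) a s) ∧ 1 ≤ d u := by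
    intro u hu
    have hex := hP u hu
    have huS : u ∉ S := (Finset.mem_sdiff.mp hu).2
    have hd : d u = Nat.find hex := by rw [hd_def]; simp only [dif_pos hex]
    have hspec : ∃ s ∈ S, G.walkN X (d u) u s := hd ▸ Nat.find_spec hex
    have hd0 : d u ≠ 0 := by
      intro h0
      obtain ⟨s, hsS, hws⟩ := hspec
      rw [h0] at hws
      exact huS (hws ▸ hsS)
    obtain ⟨m, hm⟩ : ∃ m, d u = m + 1 := ⟨d u - 1, by omega⟩
    obtain ⟨s, hsS, hws⟩ := hspec
    rw [hm] at hws
    rcases hws with rfl | ⟨a, ⟨g, hgX, hg⟩, hw'⟩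
    · exact absurd hsS huS
    · refine ⟨g, ⟨hgX, ?_, hg ▸ Sym2.mem_mk_left u a⟩, a, hg, ⟨s, hsS, ?_⟩, by omega⟩
      · intro hgC
        exact huS (hC g hgC u (hg ▸ Sym2.mem_mk_left u a))
      · have : d u - 1 = m := by omega
        rw [this]
        exact hw'
  obtain ⟨u0, hu0⟩ := hne
  obtain ⟨g0, _⟩ := key u0 hu0
  have key' : ∀ u, ∃ g, u ∈ G.compVerts X x \ S → ((g ∈ X ∧ g ∉ C ∧ u ∈ G.ends g) ∧
      ∃ a, G.ends g = s(u, a) ∧ (∃ s ∈ S, G.walkN X (d u - 1) a s) ∧ 1 ≤ d u) := by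
    intro u
    by_cases hu : u ∈ G.compVerts X x \ S
    · obtain ⟨g, hg⟩ := key u hu
      exact ⟨g, fun _ => hg⟩
    · exact ⟨g0, fun h => absurd h hu⟩
  choose g hg using key'
  apply Finset.card_le_card_of_injOn g
  · intro u hu
    obtain ⟨hgX, hgC, hug⟩ := (hg u hu).1
    refine Finset.mem_sdiff.mpr ⟨?_, hgC⟩
    exact G.edge_mem_compEdges hgX hug (G.mem_compVerts_iff.mp (Finset.mem_sdiff.mp hu).1)
  · intro u hu u' hu' heq
    by_contra hne2
    obtain ⟨a, hga, hPa, hd1⟩ := (hg u hu).2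
    obtain ⟨a', hga', hPa', hd1'⟩ := (hg u' hu').2
    rw [heq] at hga
    have hsym : s(u', a') = s(u, a) := by rw [← hga, hga']
    rcases Sym2.eq_iff.mp hsym with ⟨h1, _⟩ | ⟨h1, h2⟩
    · exact hne2 h1.symm
    · have hPa2 : ∃ s ∈ S, G.walkN X (d u - 1) u' s := by rw [h1]; exact hPa
      have hPa2' : ∃ s ∈ S, G.walkN X (d u' - 1) u s := by rw [← h2]; exact hPa'
      have hle : d u' ≤ d u - 1 := hdle u' _ hPa2
      have hle' : d u ≤ d u' - 1 := hdle u _ hPa2'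
      omega

lemma count1 (X : Finset G.E) (x : G.V) :
    (G.compVerts X x).card ≤ (G.compEdges X x).card + 1 := by
  classical
  have h := G.inj_card X x {x} ∅ ⟨x, Finset.mem_singleton_self x, Relation.ReflTransGen.refl⟩
    (by simp)
  have hx : x ∈ G.compVerts X x := G.mem_compVerts_iff.mpr Relation.ReflTransGen.refl
  rw [Finset.sdiff_empty, Finset.sdiff_singleton_eq_erase, Finset.card_erase_of_mem hx] at h
  omega

lemma count2 (X : Finset G.E) (x : G.V) (C : Finset G.E) (hC : C ⊆ G.compEdges X x)
    (hCne : C.Nonempty) (hgood : G.GoodSet C) :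
    (G.compVerts X x).card ≤ (G.compEdges X x).card := by
  classical
  obtain ⟨f0, hf0⟩ := hCne
  obtain ⟨a0, b0, hab0⟩ := G.ends_rep f0
  have hz : a0 ∈ G.supp C := G.mem_supp_iff.mpr ⟨f0, hf0, hab0 ▸ Sym2.mem_mk_left a0 b0⟩
  have hsub : G.supp C ⊆ G.compVerts X x := by
    intro v hv
    obtain ⟨f, hf, hvf⟩ := G.mem_supp_iff.mp hv
    exact G.mem_compVerts_iff.mpr (G.reach_end_of_compEdges (hC hf) hvf)
  have h1 := G.inj_card X x (G.supp C) C
    ⟨a0, hz, G.mem_compVerts_iff.mp (hsub hz)⟩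
    (fun f hf u hu => G.mem_supp_iff.mpr ⟨f, hf, hu⟩)
  have h2 : (G.supp C).card ≤ C.card := by
    have hh := G.handshake C
    have hs := Finset.card_nsmul_le_sum (G.supp C) (G.degIn C) 2
      (fun v hv => hgood v (G.mem_supp_iff.mp hv))
    rw [smul_eq_mul] at hs
    have hs2 : (G.supp C).card * 2 ≤ 2 * C.card := by
      rw [← hh]
      exact hs
    omega

  have e1 := Finset.card_sdiff_add_card_eq_card hsub
  have e2 := Finset.card_sdiff_add_card_eq_card hC
  omega

lemma exc : ∀ (Y : Finset G.E), Y.Nonempty → (G.supp Y).card ≤ Y.card →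
    ∃ C, C ⊆ Y ∧ C.Nonempty ∧ G.GoodSet C := by
  intro Y
  induction Y using Finset.strongInduction with
  | _ Y ih =>
    intro hne hc
    by_cases hgd : G.GoodSet Y
    · exact ⟨Y, subset_rfl, hne, hgd⟩
    · simp only [GoodSet, not_forall] at hgd
      obtain ⟨v, hvsupp, hdlt⟩ := hgd
      obtain ⟨f0, hf0, hvf0⟩ := hvsupp
      have hd1 : G.degIn Y v = 1 := by
        have := G.one_le_degIn hf0 hvf0
        omega
      obtain ⟨f, hfY, hvf, hnl, huniq⟩ := G.deg_one_edge hd1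
      have hvs : v ∉ G.supp (Y.erase f) := by
        intro h
        obtain ⟨g, hg, hvg⟩ := G.mem_supp_iff.mp h
        obtain ⟨hgne, hgY⟩ := Finset.mem_erase.mp hg
        exact hgne (huniq g hgY hvg)
      have hsub : G.supp (Y.erase f) ⊆ (G.supp Y).erase v := by
        intro w hw
        refine Finset.mem_erase.mpr ⟨fun hwv => hvs (hwv ▸ hw), ?_⟩
        obtain ⟨g, hg, hwg⟩ := G.mem_supp_iff.mp hw
        exact G.mem_supp_iff.mpr ⟨g, (Finset.mem_erase.mp hg).2, hwg⟩
      have hvY : v ∈ G.supp Y := G.mem_supp_iff.mpr ⟨f, hfY, hvf⟩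
      have hcard' : (G.supp (Y.erase f)).card ≤ (Y.erase f).card := by
        have hc1 := Finset.card_le_card hsub
        rw [Finset.card_erase_of_mem hvY] at hc1
        rw [Finset.card_erase_of_mem hfY]
        have hpos : 1 ≤ (G.supp Y).card := Finset.card_pos.mpr ⟨v, hvY⟩
        omega
      have hne' : (Y.erase f).Nonempty := by
        rw [Finset.nonempty_iff_ne_empty]
        intro hemp
        have hYf : Y = {f} := by
          have h1 := (Finset.erase_eq_empty_iff Y f).mp hemp
          rcases h1 with h1 | h1
          · exact absurd h1 (Finset.nonempty_iff_ne_empty.mp hne)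
          · exact h1
        obtain ⟨a, b, hab⟩ := G.ends_rep f
        have hanb : a ≠ b := by
          intro h
          subst h
          rcases Sym2.mem_iff.mp (hab ▸ hvf) with rfl | rfl <;> exact hnl hab
        have hpair : ({a, b} : Finset G.V) ⊆ G.supp Y := by
          intro w hw
          rcases Finset.mem_insert.mp hw with hwa | hw
          · rw [hwa]
            exact G.mem_supp_iff.mpr ⟨f, hfY, hab ▸ Sym2.mem_mk_left a b⟩
          · rw [Finset.mem_singleton.mp hw]
            exact G.mem_supp_iff.mpr ⟨f, hfY, hab ▸ Sym2.mem_mk_right a b⟩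
        have h2 := Finset.card_le_card hpair
        rw [Finset.card_pair hanb] at h2
        rw [hYf] at hc h2
        simp only [Finset.card_singleton] at hc
        omega
      obtain ⟨Cc, hCc, hCcne, hCcgood⟩ := ih (Y.erase f) (Finset.erase_ssubset hfY) hne' hcard'
      exact ⟨Cc, hCc.trans (Finset.erase_subset f Y), hCcne, hCcgood⟩

lemma exists_min_connector {X0 : Finset G.E} {p q : G.V} (h : G.reachIn X0 p q) :
    ∃ D ⊆ X0, G.reachIn D p q ∧
      ∀ v, v ≠ p → v ≠ q → (∃ f ∈ D, v ∈ G.ends f) → 2 ≤ G.degIn D v := by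
  classical
  have hne : (X0.powerset.filter (fun D => G.reachIn D p q)).Nonempty :=
    ⟨X0, Finset.mem_filter.mpr ⟨Finset.mem_powerset.mpr subset_rfl, h⟩⟩
  obtain ⟨D, hD, hmin⟩ := Finset.exists_min_image _ Finset.card hne
  obtain ⟨hDp, hDr⟩ := Finset.mem_filter.mp hD
  have hDsub := Finset.mem_powerset.mp hDp
  refine ⟨D, hDsub, hDr, ?_⟩
  rintro v hvp hvq ⟨f0, hf0, hvf0⟩
  by_contra hlt
  have hd1 : G.degIn D v = 1 := by
    have := G.one_le_degIn hf0 hvf0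
    omega
  obtain ⟨f, hfD, hvf, _, _⟩ := G.deg_one_edge hd1
  have hreach' : G.reachIn (D.erase f) p q :=
    G.shortcut hd1 hfD hvf (Ne.symm hvp) (Ne.symm hvq) hDr
  have hmem : D.erase f ∈ X0.powerset.filter (fun D => G.reachIn D p q) :=
    Finset.mem_filter.mpr
      ⟨Finset.mem_powerset.mpr ((Finset.erase_subset f D).trans hDsub), hreach'⟩
  have := hmin _ hmem
  rw [Finset.card_erase_of_mem hfD] at this
  have hpos : 1 ≤ D.card := Finset.card_pos.mpr ⟨f, hfD⟩
  omega

lemma kernel_inter_good {X0 : Finset G.E} (hK : G.kernelSet ⊆ X0) (x : G.V) :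
    G.GoodSet (G.kernelSet ∩ G.compEdges X0 x) := by
  classical
  rintro v ⟨f, hf, hvf⟩
  obtain ⟨hfK, hfEx⟩ := Finset.mem_inter.mp hf
  have hxv : G.reachIn X0 x v := G.reach_end_of_compEdges hfEx hvf
  have heq : G.degIn (G.kernelSet ∩ G.compEdges X0 x) v = G.degIn G.kernelSet v := by
    unfold degIn
    refine Finset.sum_subset Finset.inter_subset_left (fun g hgK hgnot => ?_)
    by_cases hvg : v ∈ G.ends g
    · exact absurd (Finset.mem_inter.mpr ⟨hgK, G.edge_mem_compEdges (hK hgK) hvg hxv⟩) hgnot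
    · rw [if_neg, if_neg hvg]
      intro hloop
      exact hvg (hloop ▸ Sym2.mem_mk_left v v)
  rw [heq]
  exact G.kernel_good v ⟨f, hfK, hvf⟩

lemma e_not_loop (e : G.E) {x y : G.V} (hxy : G.ends e = s(x, y))
    (he : e ∉ G.kernelSet) : x ≠ y := by
  intro hxyeq
  subst hxyeq
  apply he
  refine G.good_subset_kernel (C := {e}) ?_ (Finset.mem_singleton_self e)
  rintro v ⟨f, hf, hvf⟩
  rw [Finset.mem_singleton] at hf
  subst hf
  have hvx : v = x := by
    rcases Sym2.mem_iff.mp (hxy ▸ hvf) with rfl | rfl <;> rfl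
  subst hvx
  exact G.two_le_degIn_loop (Finset.mem_singleton_self f) hxy

lemma not_reach_erase (e : G.E) {x y : G.V} (hxy : G.ends e = s(x, y))
    (he : e ∉ G.kernelSet) (hne : x ≠ y) :
    ¬ G.reachIn (Finset.univ.erase e) x y := by
  intro h
  obtain ⟨D, hDsub, hreach, hDdeg⟩ := G.exists_min_connector h
  apply he
  have hgood : G.GoodSet (insert e D) := by
    rintro v ⟨f, hf, hvf⟩
    by_cases hvx : v = x
    · subst hvx
      obtain ⟨g, hgD, hxg⟩ := G.exists_edge_of_reach_ne hreach hne
      have hge : e ≠ g := fun hh => (Finset.mem_erase.mp (hDsub hgD)).1 hh.symm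
      exact G.two_le_degIn_pair (Finset.mem_insert_self e D) (Finset.mem_insert_of_mem hgD)
        hge (hxy ▸ Sym2.mem_mk_left v y) hxg
    · by_cases hvy : v = y
      · subst hvy
        obtain ⟨g, hgD, hyg⟩ :=
          G.exists_edge_of_reach_ne (G.reachIn_symm hreach) (Ne.symm hne)
        have hge : e ≠ g := fun hh => (Finset.mem_erase.mp (hDsub hgD)).1 hh.symm
        exact G.two_le_degIn_pair (Finset.mem_insert_self e D) (Finset.mem_insert_of_mem hgD)
          hge (hxy ▸ Sym2.mem_mk_right x v) hyg
      · have hfD : f ∈ D := by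
          rcases Finset.mem_insert.mp hf with rfl | hfD
          · exfalso
            rcases Sym2.mem_iff.mp (hxy ▸ hvf) with h1 | h1
            · exact hvx h1
            · exact hvy h1
          · exact hfD
        exact le_trans (hDdeg v hvx hvy ⟨f, hfD, hvf⟩)
          (G.degIn_mono (Finset.subset_insert e D) v)
  exact G.good_subset_kernel hgood (Finset.mem_insert_self e D)

lemma reach_or (e : G.E) {x y : G.V} (hxy : G.ends e = s(x, y))
    (hconn : G.GConn) (u : G.V) :
    G.reachIn (Finset.univ.erase e) u x ∨ G.reachIn (Finset.univ.erase e) u y := by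
  obtain ⟨n, hw⟩ := G.reachIn_iff_walkN.mp (hconn.2 u x)
  have key : ∀ n u, G.walkN Finset.univ n u x →
      G.reachIn (Finset.univ.erase e) u x ∨ G.reachIn (Finset.univ.erase e) u y := by
    intro n
    induction n with
    | zero =>
      intro u hw
      exact Or.inl (hw ▸ Relation.ReflTransGen.refl)
    | succ n ih =>
      intro u hw
      rcases hw with rfl | ⟨a, ⟨g, hgU, hg⟩, hw'⟩
      · exact Or.inl Relation.ReflTransGen.refl
      by_cases hge : g = e
      · subst hge
        rcases Sym2.eq_iff.mp (hg.symm.trans hxy) with ⟨h1, _⟩ | ⟨h1, _⟩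
        · subst h1
          exact Or.inl Relation.ReflTransGen.refl
        · subst h1
          exact Or.inr Relation.ReflTransGen.refl
      · refine (ih a hw').imp ?_ ?_ <;>
          exact Relation.ReflTransGen.head ⟨g, Finset.mem_erase.mpr ⟨hge, hgU⟩, hg⟩
  exact key n u hw

lemma not_both (e : G.E) {x y : G.V} (hxy : G.ends e = s(x, y)) (hne : x ≠ y)
    (he : e ∉ G.kernelSet)
    (h1 : (G.kernelSet ∩ G.compEdges (Finset.univ.erase e) x).Nonempty)
    (h2 : (G.kernelSet ∩ G.compEdges (Finset.univ.erase e) y).Nonempty) : False := by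
  classical
  set X0 : Finset G.E := Finset.univ.erase e with hX0def
  have hKsub : G.kernelSet ⊆ X0 := fun f hf =>
    Finset.mem_erase.mpr ⟨fun hfe => he (hfe ▸ hf), Finset.mem_univ f⟩
  set C1 : Finset G.E := G.kernelSet ∩ G.compEdges X0 x with hC1def
  set C2 : Finset G.E := G.kernelSet ∩ G.compEdges X0 y with hC2def
  have hg1 : G.GoodSet C1 := G.kernel_inter_good hKsub x
  have hg2 : G.GoodSet C2 := G.kernel_inter_good hKsub y
  obtain ⟨f1, hf1⟩ := h1
  obtain ⟨a1, b1, hab1⟩ := G.ends_rep f1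
  have hz1 : ∃ g ∈ C1, a1 ∈ G.ends g := ⟨f1, hf1, hab1 ▸ Sym2.mem_mk_left a1 b1⟩
  have hxz1 : G.reachIn X0 x a1 :=
    G.reach_end_of_compEdges (Finset.mem_inter.mp hf1).2 (hab1 ▸ Sym2.mem_mk_left a1 b1)
  obtain ⟨D1, hD1sub, hD1r, hD1deg⟩ := G.exists_min_connector hxz1
  obtain ⟨f2, hf2⟩ := h2
  obtain ⟨a2, b2, hab2⟩ := G.ends_rep f2
  have hz2 : ∃ g ∈ C2, a2 ∈ G.ends g := ⟨f2, hf2, hab2 ▸ Sym2.mem_mk_left a2 b2⟩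
  have hyz2 : G.reachIn X0 y a2 :=
    G.reach_end_of_compEdges (Finset.mem_inter.mp hf2).2 (hab2 ▸ Sym2.mem_mk_left a2 b2)
  obtain ⟨D2, hD2sub, hD2r, hD2deg⟩ := G.exists_min_connector hyz2
  set Cc : Finset G.E := insert e (D1 ∪ D2 ∪ C1 ∪ C2) with hCcdef
  have hD1Cc : D1 ⊆ Cc := fun g hgm =>
    Finset.mem_insert_of_mem (by simp [Finset.mem_union, hgm])
  have hD2Cc : D2 ⊆ Cc := fun g hgm =>
    Finset.mem_insert_of_mem (by simp [Finset.mem_union, hgm])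
  have hC1Cc : C1 ⊆ Cc := fun g hgm =>
    Finset.mem_insert_of_mem (by simp [Finset.mem_union, hgm])
  have hC2Cc : C2 ⊆ Cc := fun g hgm =>
    Finset.mem_insert_of_mem (by simp [Finset.mem_union, hgm])
  have hgood : G.GoodSet Cc := by
    rintro v ⟨f, hf, hvf⟩
    by_cases hv1 : ∃ g ∈ C1, v ∈ G.ends g
    · exact le_trans (hg1 v hv1) (G.degIn_mono hC1Cc v)
    by_cases hv2 : ∃ g ∈ C2, v ∈ G.ends g
    · exact le_trans (hg2 v hv2) (G.degIn_mono hC2Cc v)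
    by_cases hvx : v = x
    · subst hvx
      have hva1 : v ≠ a1 := fun hh => hv1 (by rw [hh]; exact hz1)
      obtain ⟨g, hgD1, hvg⟩ := G.exists_edge_of_reach_ne hD1r hva1
      have hge : e ≠ g := fun hh => (Finset.mem_erase.mp (hD1sub hgD1)).1 hh.symm
      exact G.two_le_degIn_pair (Finset.mem_insert_self e _) (hD1Cc hgD1) hge
        (hxy ▸ Sym2.mem_mk_left v y) hvg
    by_cases hvy : v = y
    · subst hvy
      have hva2 : v ≠ a2 := fun hh => hv2 (by rw [hh]; exact hz2)
      obtain ⟨g, hgD2, hvg⟩ := G.exists_edge_of_reach_ne hD2r hva2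
      have hge : e ≠ g := fun hh => (Finset.mem_erase.mp (hD2sub hgD2)).1 hh.symm
      exact G.two_le_degIn_pair (Finset.mem_insert_self e _) (hD2Cc hgD2) hge
        (hxy ▸ Sym2.mem_mk_right x v) hvg
    have hfD : f ∈ D1 ∨ f ∈ D2 := by
      rcases Finset.mem_insert.mp hf with rfl | hf'
      · exfalso
        rcases Sym2.mem_iff.mp (hxy ▸ hvf) with h | h
        · exact hvx h
        · exact hvy h
      · rcases Finset.mem_union.mp hf' with hf'' | hfc2
        · rcases Finset.mem_union.mp hf'' with hf''' | hfc1
          · exact Finset.mem_union.mp hf'''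
          · exact absurd ⟨f, hfc1, hvf⟩ hv1
        · exact absurd ⟨f, hfc2, hvf⟩ hv2
    rcases hfD with hfD | hfD
    · have hva1 : v ≠ a1 := fun hh => hv1 (by rw [hh]; exact hz1)
      exact le_trans (hD1deg v hvx hva1 ⟨f, hfD, hvf⟩) (G.degIn_mono hD1Cc v)
    · have hva2 : v ≠ a2 := fun hh => hv2 (by rw [hh]; exact hz2)
      exact le_trans (hD2deg v hvy hva2 ⟨f, hfD, hvf⟩) (G.degIn_mono hD2Cc v)
  exact he (G.good_subset_kernel hgood (Finset.mem_insert_self e _))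

lemma assemble (e : G.E) {x y : G.V} (hxy : G.ends e = s(x, y))
    (hKne : G.kernelSet.Nonempty)
    (hF2 : ¬ G.reachIn (Finset.univ.erase e) x y)
    (hKx : G.kernelSet ⊆ G.compEdges (Finset.univ.erase e) x) :
    G.IsTreeCompAt (Finset.univ.erase e) y ∧
    ¬ G.IsTreeCompAt (Finset.univ.erase e) x := by
  classical
  set X0 : Finset G.E := Finset.univ.erase e with hX0def
  have hKE : (G.kernelSet ∩ G.compEdges X0 y) = ∅ := by
    rw [Finset.eq_empty_iff_forall_notMem]
    intro f hfm
    obtain ⟨hfK, hfEy⟩ := Finset.mem_inter.mp hfm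
    have hfEx := hKx hfK
    obtain ⟨u, hu, hxu⟩ := (Finset.mem_filter.mp hfEx).2
    obtain ⟨u', hu', hyu'⟩ := (Finset.mem_filter.mp hfEy).2
    exact hF2 (hxu.trans ((G.reach_of_both_ends (Finset.mem_filter.mp hfEx).1 hu hu').trans
      (G.reachIn_symm hyu')))
  constructor
  · have hub := G.count1 X0 y
    have hlb : ¬ ((G.compVerts X0 y).card ≤ (G.compEdges X0 y).card) := by
      intro hle
      have hy : y ∈ G.compVerts X0 y := G.mem_compVerts_iff.mpr Relation.ReflTransGen.refl
      have hvpos : 1 ≤ (G.compVerts X0 y).card := Finset.card_pos.mpr ⟨y, hy⟩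
      have hEyne : (G.compEdges X0 y).Nonempty := Finset.card_pos.mp (by omega)
      have hsupp : (G.supp (G.compEdges X0 y)).card ≤ (G.compEdges X0 y).card :=
        le_trans (le_trans (Finset.card_le_card G.supp_compEdges_subset) hle) le_rfl
      obtain ⟨C, hCsub, hCne, hCgood⟩ := G.exc _ hEyne hsupp
      obtain ⟨f, hfC⟩ := hCne
      have hmem : f ∈ (G.kernelSet ∩ G.compEdges X0 y) :=
        Finset.mem_inter.mpr ⟨G.good_subset_kernel hCgood hfC, hCsub hfC⟩
      rw [hKE] at hmem
      exact absurd hmem (Finset.notMem_empty f)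
    unfold IsTreeCompAt
    omega
  · intro htree
    have hcnt := G.count2 X0 x G.kernelSet hKx hKne G.kernel_good
    unfold IsTreeCompAt at htree
    omega

end Multigraph

/-- If `A` is connected with a cycle and `e ∉ ⌊A⌋`, then `A \ e` has exactly two
components, exactly one of which is a tree, and the other contains `⌊A⌋`. -/
theorem stmt_12 (A : Multigraph) (hconn : A.GConn) (hcyc : ∃ C, A.IsCycleSet C)
    (e : A.E) (he : e ∉ A.kernelSet) :
    ∃ v w : A.V,
      ¬ A.reachIn (Finset.univ.erase e) v w ∧
      (∀ u : A.V, A.reachIn (Finset.univ.erase e) u v ∨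
        A.reachIn (Finset.univ.erase e) u w) ∧
      A.IsTreeCompAt (Finset.univ.erase e) v ∧
      ¬ A.IsTreeCompAt (Finset.univ.erase e) w ∧
      A.kernelSet ⊆ A.compEdges (Finset.univ.erase e) w := by
  classical
  obtain ⟨x, y, hxy⟩ := A.ends_rep e
  have hne : x ≠ y := A.e_not_loop e hxy he
  have hF2 : ¬ A.reachIn (Finset.univ.erase e) x y := A.not_reach_erase e hxy he hne
  have hF3 : ∀ u, A.reachIn (Finset.univ.erase e) u x ∨ A.reachIn (Finset.univ.erase e) u y :=
    A.reach_or e hxy hconn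
  obtain ⟨C0, hC0⟩ := hcyc
  have hC0good : A.GoodSet C0 := by
    rintro v ⟨f, hf, hvf⟩
    exact le_of_eq (hC0.2 v (A.mem_supp_iff.mpr ⟨f, hf, hvf⟩)).symm
  have hKne : A.kernelSet.Nonempty := by
    obtain ⟨f, hf⟩ := hC0.1.1
    exact ⟨f, A.good_subset_kernel hC0good hf⟩
  have hKsub : A.kernelSet ⊆ Finset.univ.erase e := fun f hf =>
    Finset.mem_erase.mpr ⟨fun hfe => he (hfe ▸ hf), Finset.mem_univ f⟩
  have hsplit : ∀ f ∈ A.kernelSet, f ∈ A.compEdges (Finset.univ.erase e) x ∨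
      f ∈ A.compEdges (Finset.univ.erase e) y := by
    intro f hf
    obtain ⟨a, b, hab⟩ := A.ends_rep f
    rcases hF3 a with h | h
    · exact Or.inl (A.edge_mem_compEdges (hKsub hf) (hab ▸ Sym2.mem_mk_left a b)
        (A.reachIn_symm h))
    · exact Or.inr (A.edge_mem_compEdges (hKsub hf) (hab ▸ Sym2.mem_mk_left a b)
        (A.reachIn_symm h))
  by_cases hcase : (A.kernelSet ∩ A.compEdges (Finset.univ.erase e) y).Nonempty
  · have hKy : A.kernelSet ⊆ A.compEdges (Finset.univ.erase e) y := by
      intro f hf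
      rcases hsplit f hf with h | h
      · exact absurd hcase (fun hc => A.not_both e hxy hne he
          ⟨f, Finset.mem_inter.mpr ⟨hf, h⟩⟩ hc)
      · exact h
    have hF2' : ¬ A.reachIn (Finset.univ.erase e) y x := fun h => hF2 (A.reachIn_symm h)
    have hres := A.assemble e (hxy.trans Sym2.eq_swap) hKne hF2' hKy
    exact ⟨x, y, hF2, fun u => hF3 u, hres.1, hres.2, hKy⟩
  · have hKx : A.kernelSet ⊆ A.compEdges (Finset.univ.erase e) x := by
      intro f hf
      rcases hsplit f hf with h | h
      · exact h
      · exact absurd ⟨f, Finset.mem_inter.mpr ⟨hf, h⟩⟩ hcase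
    have hres := A.assemble e hxy hKne hF2 hKx
    exact ⟨y, x, fun h => hF2 (A.reachIn_symm h), fun u => (hF3 u).symm, hres.1, hres.2, hKx⟩
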